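/- For every integer n ≥ 2 and all i, j ∈ {1, …, n−1}, the entries of the matrix C_n are given explicitly by c^{(n)}_{i,j} = binom((n−1−i)+(n−1−j), n−1−i) − binom((n−1−i)+(n−1−j), n−i−j−1), where binom(m, k) := 0 whenever k < 0. -/

import Mathlib

/-!
Put `a = n - 1 - i` and `b = n - 1 - j`; the claim is `c^{(n)}_{i,j} = C(a+b, a) - C(a+b, n-1)`.
Away from the last row and column, an entry of `C_{n+1}` is a tail sum of a column of `C_n`,
so the formula propagates by induction on `n`: after reflecting the summation index, both
binomial terms are summed by the hockey-stick identity `∑_{t ≤ a} C(t+b, k) = C(a+b+1, k+1)`,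
valid whenever `b ≤ k`. The induction runs on the subtraction-free form
`c^{(n)}_{i,j} + C(a+b, n-1) = C(a+b, a)`, which also holds for the zero row `i = 0`.
-/

/-- The entries `c^{(n)}_{i,j}` of the matrices `C_n`, defined by `C_1 = (1)` and
`C_{n+1} = (τ C_n) ⊕ (1)`, where `(τ A)_{i,j} = Σ_{s=i-1}^{n} a_{s,j}` (with the
convention `a_{0,j} = 0`). Entries with an index outside `{1, …, n}` are `0`. -/
def cMat : ℕ → ℕ → ℕ → ℕ
  | 0, _, _ => 0
  | 1, i, j => if i = 1 ∧ j = 1 then 1 else 0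
  | n + 2, i, j =>
      if 1 ≤ i ∧ i ≤ n + 1 ∧ 1 ≤ j ∧ j ≤ n + 1 then
        ∑ s ∈ Finset.Icc (i - 1) (n + 1), cMat (n + 1) s j
      else if i = n + 2 ∧ j = n + 2 then 1 else 0

open Finset

theorem Finset.sum_Icc_sub_eq_sum_range {M : Type*} [AddCommMonoid M] (f : ℕ → M) {lo hi : ℕ}
    (h : lo ≤ hi) : ∑ s ∈ Icc lo hi, f (hi - s) = ∑ t ∈ range (hi - lo + 1), f t := by
  rw [← Ico_add_one_right_eq_Icc, sum_Ico_reflect _ _ le_rfl, ← Nat.Ico_zero_eq_range]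
  congr 1
  ext t
  simp only [mem_Ico]
  omega

theorem Nat.sum_range_add_choose_of_le {b k : ℕ} (h : b ≤ k) (a : ℕ) :
    ∑ t ∈ range (a + 1), (t + b).choose k = (a + b + 1).choose (k + 1) := by
  induction a with
  | zero =>
    rcases h.eq_or_lt with rfl | hlt
    · simp
    · simp [Nat.choose_eq_zero_of_lt, hlt]
  | succ a ih =>
    rw [sum_range_succ, ih, show a + 1 + b + 1 = a + b + 1 + 1 by ring,
      Nat.choose_succ_succ' (a + b + 1), add_comm, add_right_comm a 1 b]

theorem cMat_succ_succ {n i j : ℕ} (hi : 1 ≤ i) (hin : i ≤ n + 1) (hj : 1 ≤ j) (hjn : j ≤ n + 1) :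
    cMat (n + 2) i j = ∑ s ∈ Icc (i - 1) (n + 1), cMat (n + 1) s j := by
  rw [cMat, if_pos ⟨hi, hin, hj, hjn⟩]

theorem cMat_zero_left (n j : ℕ) : cMat n 0 j = 0 := by
  rcases n with _ | _ | n <;> simp [cMat]

theorem cMat_succ_last_col (m s : ℕ) : cMat (m + 1) s (m + 1) = if s = m + 1 then 1 else 0 := by
  rcases m with _ | m <;> simp [cMat]

theorem cMat_succ_last_row {m j : ℕ} (hj : j ≤ m) : cMat (m + 1) (m + 1) j = 0 := by
  rcases m with _ | m
  · simp [cMat, Nat.le_zero.mp hj]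
  · rw [cMat, if_neg (by omega), if_neg (by omega)]

theorem cMat_succ_add_choose {m i j a b : ℕ} (hj : 1 ≤ j) (hia : i + a = m) (hjb : j + b = m) :
    cMat (m + 1) i j + (a + b).choose m = (a + b).choose a := by
  induction m generalizing i j a b with
  | zero => omega
  | succ m ih =>
    rcases Nat.eq_zero_or_pos i with rfl | hi
    · obtain rfl : a = m + 1 := by omega
      simp [cMat_zero_left]
    rw [cMat_succ_succ hi (by omega) hj (by omega)]
    rcases b with _ | b
    · obtain rfl : j = m + 1 := by omega
      simp only [cMat_succ_last_col, sum_ite_eq', mem_Icc, add_zero]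
      rw [if_pos (by omega), Nat.choose_eq_zero_of_lt (by omega), Nat.choose_self]
    rw [sum_Icc_succ_top (by omega), cMat_succ_last_row (by omega), add_zero]
    have hrow : ∀ s ∈ Icc (i - 1) m,
        cMat (m + 1) s j + (m - s + b).choose m = (m - s + b).choose b := fun s hs => by
      rw [ih hj (by simp only [mem_Icc] at hs; omega) (by omega), Nat.choose_symm_add]
    have hlen : m - (i - 1) + 1 = a + 1 := by omega
    calc ∑ s ∈ Icc (i - 1) m, cMat (m + 1) s j + (a + (b + 1)).choose (m + 1)
        = ∑ s ∈ Icc (i - 1) m, cMat (m + 1) s j + ∑ s ∈ Icc (i - 1) m, (m - s + b).choose m := by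
          rw [sum_Icc_sub_eq_sum_range (fun t => (t + b).choose m) (by omega), hlen,
            Nat.sum_range_add_choose_of_le (by omega), add_assoc]
      _ = ∑ s ∈ Icc (i - 1) m, (m - s + b).choose b := by
          rw [← sum_add_distrib]
          exact sum_congr rfl hrow
      _ = (a + (b + 1)).choose a := by
          rw [sum_Icc_sub_eq_sum_range (fun t => (t + b).choose b) (by omega), hlen,
            Nat.sum_range_add_choose_of_le le_rfl, add_assoc, add_comm a, Nat.choose_symm_add]

theorem cMat_explicit_formula_general (n : ℕ) (i j : ℕ)
    (hi : i ∈ Finset.Icc 1 (n - 1)) (hj : j ∈ Finset.Icc 1 (n - 1)) :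
    (cMat n i j : ℤ) =
      (Nat.choose ((n - 1 - i) + (n - 1 - j)) (n - 1 - i) : ℤ) -
        (if (n : ℤ) - i - j - 1 < 0 then 0
         else (Nat.choose ((n - 1 - i) + (n - 1 - j)) (n - i - j - 1) : ℤ)) := by
  simp only [mem_Icc] at hi hj
  obtain ⟨m, rfl⟩ : ∃ m, n = m + 1 := ⟨n - 1, by omega⟩
  simp only [Nat.add_sub_cancel] at hi hj
  have hsum := cMat_succ_add_choose (m := m) (i := i) (a := m - i) (b := m - j) hj.1
    (by omega) (by omega)
  -- `n - i - j - 1 = (a + b) - (n - 1)`, so by symmetry the second term is `C(a + b, n - 1)`.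
  have hsecond : (if ((m + 1 : ℕ) : ℤ) - i - j - 1 < 0 then 0
      else ((m - i + (m - j)).choose (m + 1 - i - j - 1) : ℤ)) = (m - i + (m - j)).choose m := by
    split_ifs with hneg
    · rw [Nat.choose_eq_zero_of_lt (by omega), Nat.cast_zero]
    · push_cast at hneg
      rw [Nat.choose_symm_of_eq_add (b := m) (by omega)]
  simp only [Nat.add_sub_cancel, hsecond]
  omega

/-- For `n ≥ 2` and `i, j ∈ {1, …, n−1}`:
`c^{(n)}_{i,j} = binom((n−1−i)+(n−1−j), n−1−i) − binom((n−1−i)+(n−1−j), n−i−j−1)`,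
with the convention that the second binomial coefficient is `0` when `n−i−j−1 < 0`. -/
theorem cMat_explicit_formula (n : ℕ) (hn : 2 ≤ n) (i j : ℕ)
    (hi : i ∈ Finset.Icc 1 (n - 1)) (hj : j ∈ Finset.Icc 1 (n - 1)) :
    (cMat n i j : ℤ) =
      (Nat.choose ((n - 1 - i) + (n - 1 - j)) (n - 1 - i) : ℤ) -
        (if (n : ℤ) - i - j - 1 < 0 then 0
         else (Nat.choose ((n - 1 - i) + (n - 1 - j)) (n - i - j - 1) : ℤ)) :=
  cMat_explicit_formula_general n i j hi hj
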